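/- Let c(n,m) be the number of increasing 1,2-trees on {1,…,n} with m edges. In the ring ℚ[[z,w]] of formal power series in two variables, define D := Σ_{n≥1} (z^n/n!) · Σ_m c(n,m) · (1+w)^(−m), where (1+w)^(−1) denotes the multiplicative inverse of 1+w in ℚ[[w]] (each inner sum is finite since c(n,m) = 0 for m > 2n−3). Let T(x) := Σ_{n≥1} n^(n−2) x^n/n! ∈ ℚ[[x]] be the exponential generating function of Cayley trees. Then D = T∘((z−w)·e^w) + w + w²/2, where T∘((z−w)·e^w) denotes the substitution of the two-variable power series (z−w)·e^w (which has zero constant term) into T. (This is the generating-function identity C(z,u) = T(((uz+u−1)/u)·e^((1−u)/u)) + 1/(2u²) − 1/2 after the substitution u = 1/(1+w).) -/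

import Mathlib

open SimpleGraph

/-- The set of neighbors of `v` having a smaller label. -/
def lowerNbrs {n : ℕ} (G : SimpleGraph (Fin n)) (v : Fin n) : Set (Fin n) :=
  {x | G.Adj v x ∧ x < v}

/-- `G` is an increasing 1,2-tree: every vertex other than the first one has a nonempty
set of smaller neighbors, of cardinality at most 2, forming a clique. -/
def IsIncreasing12Tree {n : ℕ} (G : SimpleGraph (Fin n)) : Prop :=
  ∀ v : Fin n, 1 ≤ v.val →
    (lowerNbrs G v).Nonempty ∧ (lowerNbrs G v).ncard ≤ 2 ∧
      ∀ x ∈ lowerNbrs G v, ∀ y ∈ lowerNbrs G v, x ≠ y → G.Adj x y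

/-- The set of vertices reachable from `v` after deleting the edge `{u,v}`
(in a tree, the vertex set of the subtree rooted at `v` when `v` is the child endpoint). -/
def subtreeSet {n : ℕ} (G : SimpleGraph (Fin n)) (u v : Fin n) : Set (Fin n) :=
  {w | (G.deleteEdges {s(u, v)}).Reachable v w}

/-- `v` is the child endpoint of the edge `{u,v}`: after deleting this edge,
`v` is no longer reachable from the root. -/
def IsChild {n : ℕ} (G : SimpleGraph (Fin n)) (root u v : Fin n) : Prop :=
  G.Adj u v ∧ ¬ (G.deleteEdges {s(u, v)}).Reachable root v

/-- The minimal label occurring in a set of vertices (labels being `Fin.val`). -/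
noncomputable def minLabel {n : ℕ} (S : Set (Fin n)) : ℕ := sInf (Fin.val '' S)

/-- An edge `{u,v}` with child endpoint `v` is a twist if the minimal label in the
subtree rooted at `v` is smaller than the label of `u`. -/
def IsTwist {n : ℕ} (G : SimpleGraph (Fin n)) (root : Fin n) (e : Sym2 (Fin n)) : Prop :=
  ∃ u v : Fin n, e = s(u, v) ∧ IsChild G root u v ∧ minLabel (subtreeSet G u v) < u.val

/-- An edge `{u,v}` with child endpoint `v` is increasing if the label of `u` is smaller
than every label in the subtree rooted at `v`. -/
def IsIncreasingEdge {n : ℕ} (G : SimpleGraph (Fin n)) (root : Fin n) (e : Sym2 (Fin n)) : Prop :=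
  ∃ u v : Fin n, e = s(u, v) ∧ IsChild G root u v ∧ u.val < minLabel (subtreeSet G u v)

/-- The number of twists of `G` (with respect to the given root). -/
noncomputable def numTwists {n : ℕ} (G : SimpleGraph (Fin n)) (root : Fin n) : ℕ :=
  Nat.card {e : Sym2 (Fin n) // e ∈ G.edgeSet ∧ IsTwist G root e}

/-- The number of increasing 1,2-trees on `n` vertices with `m` edges. -/
noncomputable def numInc12Trees (n m : ℕ) : ℕ :=
  Nat.card {G : SimpleGraph (Fin n) // IsIncreasing12Tree G ∧ G.edgeSet.ncard = m}

/-- The number of Cayley trees on `n ≥ 1` vertices (rooted at the vertex with label 1)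
with exactly `j` twists. -/
noncomputable def numCayleyTwist (n j : ℕ) (h : 0 < n) : ℕ :=
  Nat.card {G : SimpleGraph (Fin n) // G.IsTree ∧ numTwists G ⟨0, h⟩ = j}

/-- The exponential generating function of Cayley trees, `T(x) = Σ_{n≥1} n^(n-2) xⁿ/n!`. -/
noncomputable def cayleyEgf : PowerSeries ℚ :=
  PowerSeries.mk fun n => if n = 0 then 0 else (n : ℚ) ^ (n - 2) / (n.factorial : ℚ)

/-- We regard `ℚ[[z,w]]` as `(ℚ[[w]])[[z]]` (the outer variable is `z`, the inner one `w`).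
`substBivar T g` is the substitution `T ∘ g = Σ_n coeff_n(T)·gⁿ` of a bivariate series `g`
into a univariate series `T`, computed coefficientwise; for a series `g` whose monomials all
have total degree at least 1 in `(z,w)` (as is the case below), the coefficient of `zʲwᵏ`
in `gⁿ` vanishes as soon as `n > j + k`, so the defining sum is finite. -/
noncomputable def substBivar (T : PowerSeries ℚ) (g : PowerSeries (PowerSeries ℚ)) :
    PowerSeries (PowerSeries ℚ) :=
  PowerSeries.mk fun j => PowerSeries.mk fun k =>
    ∑ n ∈ Finset.range (j + k + 1),
      PowerSeries.coeff (R := ℚ) n T *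
        PowerSeries.coeff (R := ℚ) k (PowerSeries.coeff (R := PowerSeries ℚ) j (g ^ n))

/-- The series `D = Σ_{n≥1} (zⁿ/n!)·Σ_m c(n,m)·(1+w)^(-m)`, where `c(n,m)` is the number of
increasing 1,2-trees with `n` vertices and `m` edges (the inner sum is finite since
`c(n,m) = 0` for `m > 2n-3`, so we may restrict it to `m < 2n`). -/
noncomputable def Dser : PowerSeries (PowerSeries ℚ) :=
  PowerSeries.mk fun n =>
    if n = 0 then 0 else
      PowerSeries.C (R := ℚ) ((n.factorial : ℚ))⁻¹ *
        ∑ m ∈ Finset.range (2 * n),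
          PowerSeries.C (R := ℚ) (numInc12Trees n m : ℚ) * ((1 + PowerSeries.X)⁻¹) ^ m

/-- The bivariate series `(z - w)·e^w ∈ ℚ[[z,w]]`. -/
noncomputable def gSub : PowerSeries (PowerSeries ℚ) :=
  (PowerSeries.X - PowerSeries.C (R := PowerSeries ℚ) PowerSeries.X) *
    PowerSeries.C (R := PowerSeries ℚ) (PowerSeries.exp ℚ)


/-!
Write `u = (1 + w)⁻¹` and `Dₙ`, `Bₙ` for the coefficients of `zⁿ` in `D` and in
`T∘((z - w) eʷ)`, so that `n! Dₙ = Pₙ(u)` for `n ≥ 1`, with `Pₙ(u) = Σ_G u^|E(G)|` over the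
increasing 1,2-trees `G` on `n` vertices.
Deleting the largest vertex of such a tree on `n + 1 ≥ 2` vertices leaves one on `n` vertices,
and the deleted vertex was attached either to one of the `n` vertices (one edge) or to one of the
`|E(G)|` edges (two edges). Hence `Pₙ₊₁(u) = Σ_G u^|E(G)| (n u + |E(G)| u²)`, and since
`d/dw uᵉ = -e uᵉ⁺¹` this reads `(1 + w)(n + 1) Dₙ₊₁ = n Dₙ - Dₙ'`.

The coefficient of `zⁿ` in `((z - w) eʷ)ᵏ` is `C(k, n) (-w)ᵏ⁻ⁿ eᵏʷ`; each of these satisfies the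
same recurrence, hence so does `Bₙ`, whatever the series `T`. It remains to start the induction:
`D₁ = 1`, while for Cayley's `T` the alternating sums `Σₖ (-1)ᵏ C(i, k) kⁱ⁻² = 0` (`i ≥ 3`) give
`B₀ = T(-w eʷ) = -w - w²/2`, and the recurrence at `n = 0` then forces `B₁ = 1`.
-/

section Attachment

open Finset

variable {α : Type*}

def IsAttachable (G : SimpleGraph α) (S : Set α) : Prop :=
  S.Nonempty ∧ S.ncard ≤ 2 ∧ G.IsClique S

theorem isIncreasing12Tree_iff {n : ℕ} (G : SimpleGraph (Fin n)) :
    IsIncreasing12Tree G ↔ ∀ v : Fin n, 1 ≤ v.val → IsAttachable G (lowerNbrs G v) :=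
  Iff.rfl

theorem isAttachable_image_iff {β : Type*} (H : SimpleGraph β) (f : α ↪ β) (S : Set α) :
    IsAttachable H (f '' S) ↔ IsAttachable (H.comap f) S := by
  rw [IsAttachable, IsAttachable, Set.image_nonempty, Set.ncard_image_of_injective S f.injective,
    IsClique, IsClique, f.injective.injOn.pairwise_image]
  rfl

theorem isAttachable_iff [Finite α] (G : SimpleGraph α) (S : Set α) :
    IsAttachable G S ↔ S.ncard = 1 ∨ S.ncard = 2 ∧ G.IsClique S := by
  rw [IsAttachable, ← Set.ncard_pos]
  constructor
  · rintro ⟨hpos, hle, hS⟩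
    obtain h | h : S.ncard = 1 ∨ S.ncard = 2 := by omega
    exacts [Or.inl h, Or.inr ⟨h, hS⟩]
  · rintro (h | ⟨h, hS⟩)
    · obtain ⟨a, rfl⟩ := Set.ncard_eq_one.mp h
      exact ⟨by omega, by omega, isClique_singleton a⟩
    · exact ⟨by omega, by omega, hS⟩

open Classical in
theorem sum_attachable_pow [Fintype α] {R : Type*} [CommSemiring R] (G : SimpleGraph α) (u : R) :
    ∑ S : Set α with IsAttachable G S, u ^ S.ncard =
      Fintype.card α * u + G.edgeSet.ncard * u ^ 2 := by
  have hsingle : ({S : Set α | S.ncard = 1} : Finset (Set α)) = univ.image ({·}) := by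
    ext S
    simp [Set.ncard_eq_one, eq_comm (b := S)]
  have hedge : ({S : Set α | S.ncard = 2 ∧ G.IsClique S} : Finset (Set α)) =
      G.edgeFinset.image (fun e : Sym2 α => (e : Set α)) := by
    ext S
    simp only [mem_filter, mem_univ, true_and, mem_image, mem_edgeFinset, Set.ncard_eq_two]
    constructor
    · rintro ⟨⟨x, y, hxy, rfl⟩, hS⟩
      exact ⟨s(x, y), isClique_pair.mp hS hxy, Sym2.coe_mk⟩
    · rintro ⟨e, he, rfl⟩
      induction e using Sym2.ind with
      | _ x y =>
        rw [Sym2.coe_mk]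
        exact ⟨⟨x, y, G.ne_of_adj he, rfl⟩, isClique_pair.mpr fun _ => he⟩
  have hdisj : Disjoint ({S : Set α | S.ncard = 1} : Finset (Set α))
      ({S : Set α | S.ncard = 2 ∧ G.IsClique S} : Finset (Set α)) :=
    disjoint_filter.mpr fun S _ h1 h2 => by omega
  have hpair : ∀ e ∈ G.edgeFinset, u ^ (e : Set α).ncard = u ^ 2 := by
    intro e he
    induction e using Sym2.ind with
    | _ x y => rw [Sym2.coe_mk, Set.ncard_pair (G.ne_of_adj (mem_edgeFinset.mp he))]
  rw [filter_congr fun S _ => isAttachable_iff G S, filter_or, sum_union hdisj, hsingle, hedge,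
    sum_image Set.singleton_injective.injOn, sum_image SetLike.coe_injective.injOn,
    sum_congr rfl hpair, sum_const, ← coe_edgeFinset, Set.ncard_coe_finset]
  simp

end Attachment

section Extension

variable {n : ℕ}

def extendGraph (G : SimpleGraph (Fin n)) (S : Set (Fin n)) : SimpleGraph (Fin (n + 1)) :=
  G.map Fin.castSuccEmb ⊔ fromEdgeSet ((fun v => s(Fin.last n, v.castSucc)) '' S)

variable {G : SimpleGraph (Fin n)} {S : Set (Fin n)}

@[simp]
theorem extendGraph_adj_castSucc {a b : Fin n} :
    (extendGraph G S).Adj a.castSucc b.castSucc ↔ G.Adj a b := by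
  rw [extendGraph, sup_adj, fromEdgeSet_adj, map_adj]
  simp [(Fin.castSucc_lt_last _).ne']

@[simp]
theorem extendGraph_adj_last {b : Fin n} :
    (extendGraph G S).Adj (Fin.last n) b.castSucc ↔ b ∈ S := by
  rw [extendGraph, sup_adj, fromEdgeSet_adj, map_adj]
  simp [(Fin.castSucc_lt_last _).ne', (Fin.castSucc_lt_last _).ne]

theorem comap_extendGraph : (extendGraph G S).comap Fin.castSuccEmb = G := by
  ext a b
  exact extendGraph_adj_castSucc

theorem extendGraph_comap (H : SimpleGraph (Fin (n + 1))) :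
    extendGraph (H.comap Fin.castSuccEmb) {v | H.Adj (Fin.last n) v.castSucc} = H := by
  ext a b
  induction a using Fin.lastCases <;> induction b using Fin.lastCases <;>
    simp [adj_comm _ _ (Fin.last n)]

def extendGraphEquiv : SimpleGraph (Fin n) × Set (Fin n) ≃ SimpleGraph (Fin (n + 1)) where
  toFun p := extendGraph p.1 p.2
  invFun H := (H.comap Fin.castSuccEmb, {v | H.Adj (Fin.last n) v.castSucc})
  left_inv p := by ext <;> simp
  right_inv := extendGraph_comap

theorem lowerNbrs_extendGraph_last :
    lowerNbrs (extendGraph G S) (Fin.last n) = Fin.castSuccEmb '' S := by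
  ext x
  induction x using Fin.lastCases <;> simp [lowerNbrs, Fin.castSucc_lt_last]

theorem lowerNbrs_extendGraph_castSucc (v : Fin n) :
    lowerNbrs (extendGraph G S) v.castSucc = Fin.castSuccEmb '' lowerNbrs G v := by
  ext x
  induction x using Fin.lastCases <;> simp [lowerNbrs, adj_comm _ _ (Fin.last n), Fin.le_last]

theorem isIncreasing12Tree_extendGraph_iff (hn : 1 ≤ n) :
    IsIncreasing12Tree (extendGraph G S) ↔ IsIncreasing12Tree G ∧ IsAttachable G S := by
  simp only [isIncreasing12Tree_iff, Fin.forall_fin_succ', Fin.val_castSucc, Fin.val_last,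
    lowerNbrs_extendGraph_castSucc, lowerNbrs_extendGraph_last, isAttachable_image_iff,
    comap_extendGraph, hn, forall_const]

theorem ncard_edgeSet_extendGraph :
    (extendGraph G S).edgeSet.ncard = G.edgeSet.ncard + S.ncard := by
  have hlast_ne (v : Fin n) : Fin.last n ≠ v.castSucc := (Fin.castSucc_lt_last v).ne'
  have hnew : (fun v => s(Fin.last n, v.castSucc)) '' S \ Sym2.diagSet =
      (fun v => s(Fin.last n, v.castSucc)) '' S := by
    refine sdiff_eq_left.mpr (Set.disjoint_left.mpr ?_)
    rintro _ ⟨v, -, rfl⟩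
    simpa using hlast_ne v
  have hdisj : Disjoint (Fin.castSuccEmb.sym2Map '' G.edgeSet)
      ((fun v => s(Fin.last n, v.castSucc)) '' S) := by
    refine Set.disjoint_left.mpr ?_
    rintro _ ⟨e, -, rfl⟩ ⟨v, -, he⟩
    induction e using Sym2.ind with
    | _ a b => simp [hlast_ne] at he
  have hinj : Function.Injective fun v : Fin n => s(Fin.last n, v.castSucc) := by
    intro a b h
    simpa [hlast_ne] using h
  rw [extendGraph, edgeSet_sup, edgeSet_map, edgeSet_fromEdgeSet, hnew,
    Set.ncard_union_eq hdisj, Set.ncard_image_of_injective _ Fin.castSuccEmb.sym2Map.injective,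
    Set.ncard_image_of_injective _ hinj]

end Extension

section Counting

variable {R : Type*} [CommSemiring R]

open Classical in
noncomputable def inc12EdgeSum (n : ℕ) (u : R) : R :=
  ∑ G : SimpleGraph (Fin n) with IsIncreasing12Tree G, u ^ G.edgeSet.ncard

theorem inc12EdgeSum_one (u : R) : inc12EdgeSum 1 u = 1 := by
  classical
  rw [inc12EdgeSum, Finset.filter_true_of_mem fun G _ v hv => (Nat.not_lt.mpr hv v.isLt).elim,
    Fintype.sum_unique]
  simp [show (default : SimpleGraph (Fin 1)) = ⊥ from Subsingleton.elim _ _]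

open Classical in
theorem inc12EdgeSum_succ {n : ℕ} (hn : 1 ≤ n) (u : R) :
    inc12EdgeSum (n + 1) u = ∑ G : SimpleGraph (Fin n) with IsIncreasing12Tree G,
      u ^ G.edgeSet.ncard * (n * u + G.edgeSet.ncard * u ^ 2) := by
  simp_rw [inc12EdgeSum, Finset.sum_filter, ← extendGraphEquiv.sum_comp, Fintype.sum_prod_type]
  refine Fintype.sum_congr _ _ fun G => ?_
  simp only [extendGraphEquiv, Equiv.coe_fn_mk, isIncreasing12Tree_extendGraph_iff hn,
    ncard_edgeSet_extendGraph, pow_add]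
  by_cases hG : IsIncreasing12Tree G
  · simp only [hG, true_and, if_true, ← Finset.sum_filter, ← Finset.mul_sum, sum_attachable_pow,
      Fintype.card_fin]
  · simp [hG]

theorem ncard_edgeSet_le_of_isIncreasing12Tree {n : ℕ} (hn : 1 ≤ n) {G : SimpleGraph (Fin n)}
    (hG : IsIncreasing12Tree G) : G.edgeSet.ncard ≤ 2 * n - 3 := by
  induction n, hn using Nat.le_induction with
  | base =>
    rw [Subsingleton.elim G ⊥]
    simp
  | succ n hn ih =>
    obtain ⟨⟨G', S⟩, rfl⟩ := extendGraphEquiv.surjective G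
    obtain ⟨hG', -, hS, -⟩ := (isIncreasing12Tree_extendGraph_iff (G := G') (S := S) hn).mp hG
    have hSn : S.ncard ≤ n := by simpa using S.ncard_le_card
    have := ih hG'
    change (extendGraph G' S).edgeSet.ncard ≤ _
    rw [ncard_edgeSet_extendGraph]
    omega

theorem numInc12Trees_eq_zero {n m : ℕ} (hn : 1 ≤ n) (hm : 2 * n - 3 < m) :
    numInc12Trees n m = 0 := by
  rw [numInc12Trees, Nat.card_eq_zero]
  refine Or.inl ⟨fun ⟨G, hG, hGm⟩ => ?_⟩
  have := ncard_edgeSet_le_of_isIncreasing12Tree hn hG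
  omega

theorem sum_numInc12Trees_mul_pow {n : ℕ} (hn : 1 ≤ n) (u : R) :
    ∑ m ∈ Finset.range (2 * n), (numInc12Trees n m : R) * u ^ m = inc12EdgeSum n u := by
  classical
  have hbound : ∀ G ∈ ({G | IsIncreasing12Tree G} : Finset (SimpleGraph (Fin n))),
      G.edgeSet.ncard ∈ Finset.range (2 * n) := fun G hG => by
    have := ncard_edgeSet_le_of_isIncreasing12Tree hn (Finset.mem_filter.mp hG).2
    rw [Finset.mem_range]
    omega
  rw [inc12EdgeSum, ← Finset.sum_fiberwise_of_maps_to' hbound]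
  refine Finset.sum_congr rfl fun m _ => ?_
  rw [Finset.sum_const, Finset.filter_filter, nsmul_eq_mul, numInc12Trees,
    Nat.card_eq_fintype_card, Fintype.card_subtype]

end Counting

section PowerSeriesFacts

open PowerSeries

variable {R : Type*} [CommSemiring R]

theorem one_add_X_ne_zero [Nontrivial R] : (1 + X : R⟦X⟧) ≠ 0 := fun h => by
  simpa using congrArg constantCoeff h

theorem X_pow_dvd_derivative {M : ℕ} {f : R⟦X⟧} (h : X ^ (M + 1) ∣ f) :
    X ^ M ∣ d⁄dX R f :=
  X_pow_dvd_iff.mpr fun m hm => by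
    rw [coeff_derivative, X_pow_dvd_iff.mp h (m + 1) (by omega), zero_mul]

theorem eq_zero_of_forall_X_pow_dvd {f : R⟦X⟧} (h : ∀ M, X ^ M ∣ f) : f = 0 :=
  ext fun i => X_pow_dvd_iff.mp (h (i + 1)) i i.lt_succ_self

theorem derivative_inv_one_add_X_pow {K : Type*} [Field K] (e : ℕ) :
    d⁄dX K ((1 + X : K⟦X⟧)⁻¹ ^ e) = -((e : K⟦X⟧) * (1 + X : K⟦X⟧)⁻¹ ^ (e + 1)) := by
  rw [derivative_pow, derivative_inv', map_add, derivative_X, Derivation.map_one_eq_zero]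
  rcases e with _ | e
  · simp
  · simp only [Nat.cast_add, Nat.cast_one, Nat.add_sub_cancel]
    ring

theorem derivative_exp_pow {A : Type*} [CommRing A] [Algebra ℚ A] (k : ℕ) :
    d⁄dX A (exp A ^ k) = k * exp A ^ k := by
  rw [derivative_pow, derivative_exp]
  rcases k with _ | k
  · simp
  · simp only [Nat.add_sub_cancel]
    ring

theorem coeff_neg_X_mul_exp_pow {k i : ℕ} (hk : k ≤ i) :
    coeff i ((-X) ^ k * exp ℚ ^ k) = (-1) ^ k * (k : ℚ) ^ (i - k) / (i - k).factorial := by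
  rw [neg_pow, mul_assoc, show (-1 : ℚ⟦X⟧) ^ k = C ((-1) ^ k) by simp, coeff_C_mul,
    coeff_X_pow_mul', if_pos hk, exp_pow_eq_rescale_exp, coeff_rescale, coeff_exp]
  simp
  ring

end PowerSeriesFacts

section Dseries

open PowerSeries Nat

theorem one_add_X_mul_inc12EdgeSum_succ {n : ℕ} (hn : 1 ≤ n) :
    (1 + X) * inc12EdgeSum (n + 1) (1 + X : ℚ⟦X⟧)⁻¹ =
      (n : ℚ⟦X⟧) * inc12EdgeSum n (1 + X : ℚ⟦X⟧)⁻¹ -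
        d⁄dX ℚ (inc12EdgeSum n (1 + X : ℚ⟦X⟧)⁻¹) := by
  have hinv : (1 + X : ℚ⟦X⟧) * (1 + X)⁻¹ = 1 := PowerSeries.mul_inv_cancel _ (by simp)
  classical
  rw [inc12EdgeSum_succ hn, inc12EdgeSum, map_sum, Finset.mul_sum, Finset.mul_sum,
    ← Finset.sum_sub_distrib]
  refine Finset.sum_congr rfl fun G _ => ?_
  rw [derivative_inv_one_add_X_pow]
  linear_combination (G.edgeSet.ncard * (1 + X : ℚ⟦X⟧)⁻¹ ^ (G.edgeSet.ncard + 1)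
    + n * (1 + X : ℚ⟦X⟧)⁻¹ ^ G.edgeSet.ncard) * hinv

theorem coeff_Dser {n : ℕ} (hn : 1 ≤ n) :
    coeff n Dser = (n ! : ℚ)⁻¹ • inc12EdgeSum n (1 + X : ℚ⟦X⟧)⁻¹ := by
  rw [Dser, coeff_mk, if_neg (by omega), ← sum_numInc12Trees_mul_pow hn, smul_eq_C_mul]
  simp only [map_natCast]

theorem one_add_X_mul_coeff_Dser_succ {n : ℕ} (hn : 1 ≤ n) :
    (1 + X) * ((n + 1 : ℚ⟦X⟧) * coeff (n + 1) Dser) =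
      (n : ℚ⟦X⟧) * coeff n Dser - d⁄dX ℚ (coeff n Dser) := by
  have hfact : ((n + 1 : ℚ⟦X⟧) * C ((n + 1) ! : ℚ)⁻¹) = C (n ! : ℚ)⁻¹ := by
    rw [show (n + 1 : ℚ⟦X⟧) = C ((n : ℚ) + 1) by simp, ← map_mul, Nat.factorial_succ]
    congr 1
    push_cast
    field_simp
  rw [coeff_Dser hn, coeff_Dser (by omega), Derivation.map_smul, smul_eq_C_mul, smul_eq_C_mul,
    smul_eq_C_mul]
  linear_combination C (n ! : ℚ)⁻¹ * one_add_X_mul_inc12EdgeSum_succ hn +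
    (1 + X) * inc12EdgeSum (n + 1) (1 + X : ℚ⟦X⟧)⁻¹ * hfact

end Dseries

section Substitution

open PowerSeries

theorem coeff_gSub_pow (n k : ℕ) :
    coeff n (gSub ^ k) = (k.choose n : ℚ⟦X⟧) * (-X) ^ (k - n) * exp ℚ ^ k := by
  have hlin : (X - C X : ℚ⟦X⟧⟦X⟧) =
      ((Polynomial.X + Polynomial.C (-X) : Polynomial ℚ⟦X⟧) : ℚ⟦X⟧⟦X⟧) := by
    simp [sub_eq_add_neg]
  rw [gSub, mul_pow, hlin, ← Polynomial.coe_pow, ← map_pow, coeff_mul_C, Polynomial.coeff_coe,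
    Polynomial.coeff_X_add_C_pow]
  ring

theorem one_add_X_mul_coeff_gSub_pow_succ (n k : ℕ) :
    (1 + X) * ((n + 1 : ℚ⟦X⟧) * coeff (n + 1) (gSub ^ k)) =
      (n : ℚ⟦X⟧) * coeff n (gSub ^ k) - d⁄dX ℚ (coeff n (gSub ^ k)) := by
  simp only [coeff_gSub_pow]
  rcases Nat.lt_or_ge k (n + 1) with hk | hk
  · rw [Nat.choose_eq_zero_of_lt hk]
    rcases Nat.lt_succ_iff_lt_or_eq.mp hk with hk | rfl
    · simp [Nat.choose_eq_zero_of_lt hk]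
    · simp only [Nat.choose_self, Nat.sub_self, pow_zero, Nat.cast_one, Nat.cast_zero, one_mul,
        zero_mul, mul_zero, derivative_exp_pow, sub_self]
  · obtain ⟨j, rfl⟩ := Nat.exists_eq_add_of_le hk
    have hchoose := congrArg (Nat.cast (R := ℚ⟦X⟧)) (Nat.choose_succ_right_eq (n + 1 + j) n)
    rw [show n + 1 + j - n = j + 1 by omega, show n + 1 + j - (n + 1) = j by omega] at *
    push_cast at hchoose
    rw [Derivation.leibniz, Derivation.leibniz, derivative_exp_pow, Derivation.leibniz_pow]
    simp only [Derivation.map_natCast, map_neg, derivative_X, smul_eq_mul]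
    push_cast
    linear_combination ((1 + X) * (-X) ^ j * exp ℚ ^ (n + 1 + j)) * hchoose

theorem coeff_coeff_gSub_pow_eq_zero {n i k : ℕ} (h : n + i < k) :
    coeff i (coeff n (gSub ^ k)) = 0 := by
  have hdvd : X ^ (k - n) ∣ coeff n (gSub ^ k) := by
    rw [coeff_gSub_pow, neg_pow]
    exact ⟨(k.choose n : ℚ⟦X⟧) * (-1) ^ (k - n) * exp ℚ ^ k, by ring⟩
  exact X_pow_dvd_iff.mp hdvd i (by omega)

theorem X_pow_dvd_coeff_substBivar_gSub_sub (T : ℚ⟦X⟧) {n M N : ℕ} (h : n + M < N) :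
    X ^ (M + 1) ∣ coeff n (substBivar T gSub) -
      ∑ k ∈ Finset.range N, coeff k T • coeff n (gSub ^ k) := by
  refine X_pow_dvd_iff.mpr fun i hi => ?_
  rw [map_sub, sub_eq_zero, substBivar, coeff_mk, coeff_mk, map_sum]
  refine Finset.sum_subset (Finset.range_subset_range.mpr (by omega)) (fun k hk hk' => ?_)
    |>.trans (Finset.sum_congr rfl fun k _ => ?_)
  · simp only [Finset.mem_range] at hk hk'
    rw [coeff_coeff_gSub_pow_eq_zero (by omega), mul_zero]
  · rw [map_smul, smul_eq_mul]

theorem one_add_X_mul_coeff_substBivar_gSub_succ (T : ℚ⟦X⟧) (n : ℕ) :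
    (1 + X) * ((n + 1 : ℚ⟦X⟧) * coeff (n + 1) (substBivar T gSub)) =
      (n : ℚ⟦X⟧) * coeff n (substBivar T gSub) - d⁄dX ℚ (coeff n (substBivar T gSub)) := by
  set B : ℕ → ℚ⟦X⟧ := fun n => coeff n (substBivar T gSub)
  set F : ℕ → ℕ → ℚ⟦X⟧ := fun N n => ∑ k ∈ Finset.range N, coeff k T • coeff n (gSub ^ k)
  have hF (N : ℕ) : (1 + X) * ((n + 1 : ℚ⟦X⟧) * F N (n + 1)) =
      (n : ℚ⟦X⟧) * F N n - d⁄dX ℚ (F N n) := by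
    simp only [F, map_sum, Finset.mul_sum, ← Finset.sum_sub_distrib, Derivation.map_smul,
      mul_smul_comm, one_add_X_mul_coeff_gSub_pow_succ, smul_sub]
  -- The partial sums `F N` satisfy the recurrence exactly and agree with `B` to any given
  -- order once `N` is large, so `B` satisfies it modulo every power of `X`.
  rw [← sub_eq_zero]
  refine eq_zero_of_forall_X_pow_dvd fun M => ?_
  have hn := X_pow_dvd_coeff_substBivar_gSub_sub T (n := n) (M := M) (N := n + M + 2) (by omega)
  have hn1 := X_pow_dvd_coeff_substBivar_gSub_sub T (n := n + 1) (M := M) (N := n + M + 2)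
    (by omega)
  have hsplit : (1 + X) * ((n + 1 : ℚ⟦X⟧) * B (n + 1)) - ((n : ℚ⟦X⟧) * B n - d⁄dX ℚ (B n)) =
      (1 + X) * ((n + 1 : ℚ⟦X⟧) * (B (n + 1) - F (n + M + 2) (n + 1))) -
        (n : ℚ⟦X⟧) * (B n - F (n + M + 2) n) + d⁄dX ℚ (B n - F (n + M + 2) n) := by
    rw [map_sub]
    linear_combination hF (n + M + 2)
  have hle : (X : ℚ⟦X⟧) ^ M ∣ X ^ (M + 1) := pow_dvd_pow X M.le_succ
  rw [hsplit]
  exact dvd_add (dvd_sub (dvd_mul_of_dvd_right (dvd_mul_of_dvd_right (hle.trans hn1) _) _)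
    (dvd_mul_of_dvd_right (hle.trans hn) _)) (X_pow_dvd_derivative hn)

end Substitution

section Cayley

open PowerSeries Nat Finset

theorem sum_neg_one_pow_mul_choose_mul_pow_eq_zero {R : Type*} [CommRing R] {j n : ℕ}
    (h : j < n) : ∑ k ∈ range (n + 1), (-1 : R) ^ (n - k) * n.choose k * (k : R) ^ j = 0 := by
  have := congr_fun (fwdDiff_iter_pow_eq_zero_of_lt (R := R) h) 0
  rw [fwdDiff_iter_eq_sum_shift] at this
  simpa [zsmul_eq_mul] using this

theorem coeff_cayleyEgf_mul_eq_choose_mul_pow {i k : ℕ} (hi : 3 ≤ i) (hk : k ≤ i) :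
    coeff k cayleyEgf * ((-1) ^ k * (k : ℚ) ^ (i - k) / (i - k)!) =
      (-1) ^ i / i ! * ((-1) ^ (i - k) * i.choose k * (k : ℚ) ^ (i - 2)) := by
  rw [cayleyEgf, coeff_mk]
  rcases Nat.eq_zero_or_pos k with rfl | hk0
  · simp [show i - 2 ≠ 0 by omega]
  have hpow : (k : ℚ) ^ (k - 2) * (k : ℚ) ^ (i - k) = (k : ℚ) ^ (i - 2) := by
    rcases Nat.lt_or_ge k 2 with hk2 | hk2
    · obtain rfl : k = 1 := by omega
      simp
    · rw [← pow_add]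
      congr 1
      omega
  have hsign : (-1 : ℚ) ^ i * (-1) ^ (i - k) = (-1) ^ k := by
    rw [← pow_add, show i + (i - k) = k + 2 * (i - k) by omega, pow_add, pow_mul]
    simp
  rw [if_neg hk0.ne', Nat.cast_choose ℚ hk]
  field_simp
  linear_combination -((k : ℚ) ^ (k - 2) * (k : ℚ) ^ (i - k)) * hsign +
    (-1 : ℚ) ^ i * (-1) ^ (i - k) * hpow

theorem coeff_zero_substBivar_cayleyEgf :
    coeff 0 (substBivar cayleyEgf gSub) = -(X + C (1 / 2 : ℚ) * X ^ 2) := by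
  ext i
  have hcoeff : coeff i (coeff 0 (substBivar cayleyEgf gSub)) =
      ∑ k ∈ range (i + 1), coeff k cayleyEgf * ((-1) ^ k * (k : ℚ) ^ (i - k) / (i - k)!) := by
    rw [substBivar, coeff_mk, coeff_mk, zero_add]
    refine sum_congr rfl fun k hk => ?_
    rw [coeff_gSub_pow, Nat.choose_zero_right, Nat.cast_one, one_mul, Nat.sub_zero,
      coeff_neg_X_mul_exp_pow (Nat.lt_succ_iff.mp (mem_range.mp hk))]
  rw [hcoeff]
  rcases Nat.lt_or_ge i 3 with hi | hi
  · interval_cases i <;> norm_num [sum_range_succ, cayleyEgf, coeff_X]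
  · rw [sum_congr rfl fun k hk =>
        coeff_cayleyEgf_mul_eq_choose_mul_pow hi (Nat.lt_succ_iff.mp (mem_range.mp hk)),
      ← mul_sum, sum_neg_one_pow_mul_choose_mul_pow_eq_zero (by omega), mul_zero]
    simp [coeff_X, coeff_X_pow, show i ≠ 1 by omega, show i ≠ 2 by omega]

theorem coeff_one_substBivar_cayleyEgf : coeff 1 (substBivar cayleyEgf gSub) = 1 := by
  have hrec := one_add_X_mul_coeff_substBivar_gSub_succ cayleyEgf 0
  rw [coeff_zero_substBivar_cayleyEgf] at hrec
  have hhalf : C (1 / 2 : ℚ) * 2 = (1 : ℚ⟦X⟧) := by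
    rw [← map_ofNat C 2, ← map_mul]
    norm_num
  simp only [map_neg, map_add, Derivation.leibniz, Derivation.leibniz_pow, derivative_X,
    derivative_C, smul_eq_mul, nsmul_eq_mul] at hrec
  refine mul_left_cancel₀ one_add_X_ne_zero ?_
  linear_combination hrec + X * hhalf

end Cayley

open PowerSeries in
theorem coeff_Dser_eq_coeff_substBivar {n : ℕ} (hn : 1 ≤ n) :
    coeff n Dser = coeff n (substBivar cayleyEgf gSub) := by
  induction n, hn using Nat.le_induction with
  | base =>
    rw [coeff_Dser le_rfl, inc12EdgeSum_one, coeff_one_substBivar_cayleyEgf]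
    simp
  | succ n hn ih =>
    have hrec := (one_add_X_mul_coeff_Dser_succ hn).trans
      (ih ▸ one_add_X_mul_coeff_substBivar_gSub_succ cayleyEgf n).symm
    have hn1 : (n + 1 : ℚ⟦X⟧) ≠ 0 := fun h => by
      simpa [Nat.cast_add_one_ne_zero] using congrArg constantCoeff h
    exact mul_left_cancel₀ hn1 (mul_left_cancel₀ one_add_X_ne_zero hrec)

/-- The generating-function identity `C(z,u) = T(((uz+u-1)/u)·e^((1-u)/u)) + 1/(2u²) - 1/2`
after the substitution `u = 1/(1+w)`: in `ℚ[[z,w]]` one has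
`D = T∘((z-w)·e^w) + w + w²/2`; moreover `c(n,m) = 0` for `m > 2n-3`. -/
theorem egf_increasing12Trees_closed_form :
    (∀ n : ℕ, 1 ≤ n → ∀ m : ℕ, 2 * n - 3 < m → numInc12Trees n m = 0) ∧
    Dser = substBivar cayleyEgf gSub +
      PowerSeries.C (R := PowerSeries ℚ)
        (PowerSeries.X + PowerSeries.C (R := ℚ) (1 / 2) * PowerSeries.X ^ 2) := by
  refine ⟨fun n hn m hm => numInc12Trees_eq_zero hn hm, PowerSeries.ext fun n => ?_⟩
  rw [map_add, PowerSeries.coeff_C]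
  rcases Nat.eq_zero_or_pos n with rfl | hn
  · rw [Dser, PowerSeries.coeff_mk, if_pos rfl, if_pos rfl, coeff_zero_substBivar_cayleyEgf,
      neg_add_cancel]
  · rw [if_neg hn.ne', add_zero]
    exact coeff_Dser_eq_coeff_substBivar hn
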